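/- arXiv:2505.22939 — 3 statements merged into one kernel-verified Lean document; each statement's English description precedes it below -/
import Mathlib

section
/- Fix β, δ ∈ [r] and ε > 0. No algorithm whose only access to the universe 𝒰 and to the agents' utility functions is via β-accurate discriminative queries and (1, δ, 1)-accurate generative queries can guarantee that its output slate satisfies (2β + δ − ε, 1)-costBJR, and none can guarantee (2β + δ − ε, 1)-cJR, even when all statements have unit cost (c(α) = 1 for all α ∈ 𝒰). -/
/-!
Statement 2 (Theorem 3.3 of the paper): fix `β, δ ∈ [r]` and `ε > 0`. No algorithm
whose only access to the universe and the utilities is via `β`-accurate discriminative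
queries and `(1, δ, 1)`-accurate generative queries can guarantee that its output slate
satisfies `(2β + δ − ε, 1)`-costBJR, and none can guarantee `(2β + δ − ε, 1)`-cJR, even
when all statements have unit cost.

An algorithm is modelled as an adaptive query strategy: it may issue generative queries
(receiving a fresh statement, of which it learns the cost) and discriminative queries on
previously received statements (referenced by the index in which they were received),
and finally outputs a slate consisting of previously received statements.
-/

namespace GenSoc

open Finset

open scoped Classical

/-- `ceilDiv a b = ⌈a / b⌉` for natural numbers. -/
def ceilDiv (a b : ℕ) : ℕ := (a + b - 1) / b

/-- The number of agents in `S` that approve statement `α` at level `ℓ`. -/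
noncomputable def supp {A U : Type} (u : A → U → ℕ) (α : U) (S : Finset A) (ℓ : ℕ) : ℕ :=
  (S.filter fun i => ℓ ≤ u i α).card

/-- Total cost of a slate. -/
def cost {U : Type} (c : U → ℕ) (W : Finset U) : ℕ := ∑ α ∈ W, c α

/-- A discriminative query `Disc` is `β`-accurate w.r.t. the true utilities `u`. -/
def DiscAccurate {A U : Type} (u Disc : A → U → ℕ) (β : ℕ) : Prop :=
  ∀ i α, u i α - β ≤ Disc i α ∧ Disc i α ≤ u i α + β

/-- A generative query `Gen` is `(γ,δ,μ)`-accurate w.r.t. the true utilities `u`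
and costs `c`, for utility levels in `[r]` and cost arguments in `[B]`. -/
def GenAccurate {A U : Type} (c : U → ℕ) (u : A → U → ℕ) (Gen : Finset A → ℕ → ℕ → U)
    (r B : ℕ) (γ : ℝ) (δ : ℕ) (μ : ℝ) : Prop :=
  ∀ (S : Finset A) (ℓ x : ℕ), 1 ≤ ℓ → ℓ ≤ r → 1 ≤ x → x ≤ B →
    c (Gen S ℓ x) ≤ x ∧
    ∀ α : U, c α ≤ ⌈μ * (x : ℝ)⌉₊ →
      γ * (supp u α S ℓ : ℝ) ≤ (supp u (Gen S ℓ x) S (ℓ - δ) : ℝ)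

/-- An assignment `ω` of agents to statements is balanced w.r.t. a slate `W`:
every `α ∈ W` is assigned exactly `⌊c(α)·n/B⌋` or `⌈c(α)·n/B⌉` agents. -/
noncomputable def IsBalanced {A U : Type} [Fintype A] (c : U → ℕ) (B : ℕ)
    (ω : A → U) (W : Finset U) : Prop :=
  ∀ α ∈ W,
    (Finset.univ.filter fun i : A => ω i = α).card = c α * Fintype.card A / B ∨
    (Finset.univ.filter fun i : A => ω i = α).card = ceilDiv (c α * Fintype.card A) B

/-- `(b,d)`-costBJR: there is a balanced assignment `ω : N → W` such that no (nonempty)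
coalition `S`, statement `α` and threshold `θ ∈ [r]` satisfy
(i) `|S| ≥ d·⌈c(α)·n/B⌉`, (ii) `u_i(α) ≥ θ` for all `i ∈ S`, and
(iii) `u_i(ω(i)) < θ - b` for all `i ∈ S`. -/
noncomputable def CostBJR {A U : Type} [Fintype A] (c : U → ℕ) (u : A → U → ℕ)
    (r B : ℕ) (b d : ℝ) (W : Finset U) : Prop :=
  ∃ ω : A → U, (∀ i, ω i ∈ W) ∧ IsBalanced c B ω W ∧
    ¬ ∃ (S : Finset A) (α : U) (θ : ℕ), S.Nonempty ∧ 1 ≤ θ ∧ θ ≤ r ∧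
      d * (ceilDiv (c α * Fintype.card A) B : ℝ) ≤ (S.card : ℝ) ∧
      (∀ i ∈ S, θ ≤ u i α) ∧ (∀ i ∈ S, (u i (ω i) : ℝ) + b < (θ : ℝ))

/-- `(b,d)`-cJR: no (nonempty) coalition `S`, statement `α` and threshold `θ ∈ [r]`
satisfy (i) `|S| ≥ d·⌈c(α)·n/B⌉`, (ii) `u_i(α) ≥ θ` for all `i ∈ S`, and
(iii) `u_i(α') < θ - b` for all `α' ∈ W` and `i ∈ S`. -/
def CJR {A U : Type} [Fintype A] (c : U → ℕ) (u : A → U → ℕ)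
    (r B : ℕ) (b d : ℝ) (W : Finset U) : Prop :=
  ¬ ∃ (S : Finset A) (α : U) (θ : ℕ), S.Nonempty ∧ 1 ≤ θ ∧ θ ≤ r ∧
      d * (ceilDiv (c α * Fintype.card A) B : ℝ) ≤ (S.card : ℝ) ∧
      (∀ i ∈ S, θ ≤ u i α) ∧ (∀ α' ∈ W, ∀ i ∈ S, (u i α' : ℝ) + b < (θ : ℝ))

/-- An adaptive algorithm for `n` agents, whose only access to the universe and the
utilities is via the queries. It can issue a generative query (learning the cost of
the returned statement before continuing), issue a discriminative query for an agent
and a previously received statement (referenced by the index in which it was received),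
or stop and output a slate of previously received statements. -/
inductive Strategy (n : ℕ) : Type
  | output : List ℕ → Strategy n
  | genQ : Finset (Fin n) → ℕ → ℕ → (ℕ → Strategy n) → Strategy n
  | discQ : Fin n → ℕ → (ℕ → Strategy n) → Strategy n

/-- Running a strategy against query implementations `Disc` and `Gen` (with cost
function `c`), given the list `seen` of statements received so far; returns the list
of statements forming the output slate. -/
noncomputable def runAux {n : ℕ} {U : Type} (c : U → ℕ)
    (Disc : Fin n → U → ℕ) (Gen : Finset (Fin n) → ℕ → ℕ → U) :
    Strategy n → List U → List U
  | .output idxs, seen => idxs.filterMap fun j => seen[j]?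
  | .genQ S ℓ x k, seen => runAux c Disc Gen (k (c (Gen S ℓ x))) (seen ++ [Gen S ℓ x])
  | .discQ i j k, seen => runAux c Disc Gen (k ((seen[j]?).elim 0 (Disc i))) seen

/-- The slate output by a strategy run against query implementations `Disc`, `Gen`. -/
noncomputable def runSlate {n : ℕ} {U : Type} (c : U → ℕ)
    (Disc : Fin n → U → ℕ) (Gen : Finset (Fin n) → ℕ → ℕ → U)
    (strat : Strategy n) : Finset U :=
  (runAux c Disc Gen strat []).toFinset

/-!
Take six agents, budget `3`, unit costs and `r = 2β + δ + 1`. The universe consists of a statement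
`some S` for every coalition `S`, which is what the generative oracle returns on `S`, and one
statement `none` that it never returns. A hidden pair `T` values `none` at `r`, while `some S` is
worth `2β + 1` to the larger of `S ∩ T` and `S \ T` and `1` to everyone else. Then `some S`
approves at level `ℓ - δ` at least as many agents of `S` as any statement does at level `ℓ`, and
the constant answer `β + 1` on generated statements is `β`-accurate. So the run of the
algorithm, and with it its slate of at most three statements `some S`, does not depend on `T`.
Now choose `T` to meet each of these sets in at most half of it: avoid the singleton sets, and
the pairs inside the sets of size `2` or `3`; these rule out at most three pairs per set, fewer
than the pairs of agents that remain. The pair `T` has the size `⌈6 / 3⌉` of a cohesive group, and it gets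
utility `1` from the slate but `r` from `none`, a gap of `2β + δ`.
-/

section Run

variable {n : ℕ} {U : Type} (c : U → ℕ) (G : Finset (Fin n) → ℕ → ℕ → U) {P : U → Prop}

theorem forall_mem_runAux {D : Fin n → U → ℕ} (hG : ∀ S ℓ x, P (G S ℓ x)) :
    ∀ (strat : Strategy n) (seen : List U), (∀ a ∈ seen, P a) →
      ∀ a ∈ runAux c D G strat seen, P a := by
  intro strat
  induction strat with
  | output idxs =>
    intro seen hseen a ha
    obtain ⟨j, -, hj⟩ := List.mem_filterMap.1 ha
    exact hseen a (List.mem_of_getElem? hj)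
  | genQ S ℓ x k ih =>
    intro seen hseen
    refine ih _ _ fun a ha => ?_
    rcases List.mem_append.1 ha with ha | ha
    · exact hseen a ha
    · exact List.mem_singleton.1 ha ▸ hG S ℓ x
  | discQ i j k ih => exact fun seen hseen => ih _ seen hseen

theorem forall_mem_runSlate {D : Fin n → U → ℕ} (hG : ∀ S ℓ x, P (G S ℓ x))
    (strat : Strategy n) : ∀ a ∈ runSlate c D G strat, P a := fun a ha =>
  forall_mem_runAux c G hG strat [] (by simp) a (List.mem_toFinset.1 ha)

theorem runAux_congr_disc {D₁ D₂ : Fin n → U → ℕ} (hG : ∀ S ℓ x, P (G S ℓ x))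
    (hD : ∀ i a, P a → D₁ i a = D₂ i a) :
    ∀ (strat : Strategy n) (seen : List U), (∀ a ∈ seen, P a) →
      runAux c D₁ G strat seen = runAux c D₂ G strat seen := by
  intro strat
  induction strat with
  | output idxs => intro seen _; rfl
  | genQ S ℓ x k ih =>
    intro seen hseen
    refine ih _ _ fun a ha => ?_
    rcases List.mem_append.1 ha with ha | ha
    · exact hseen a ha
    · exact List.mem_singleton.1 ha ▸ hG S ℓ x
  | discQ i j k ih =>
    intro seen hseen
    have hanswer : (seen[j]?).elim 0 (D₁ i) = (seen[j]?).elim 0 (D₂ i) := by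
      cases hj : seen[j]? with
      | none => rfl
      | some a => exact hD i a (hseen a (List.mem_of_getElem? hj))
    simp only [runAux, hanswer]
    exact ih _ seen hseen

theorem runSlate_congr_disc {D₁ D₂ : Fin n → U → ℕ} (hG : ∀ S ℓ x, P (G S ℓ x))
    (hD : ∀ i a, P a → D₁ i a = D₂ i a) (strat : Strategy n) :
    runSlate c D₁ G strat = runSlate c D₂ G strat := by
  rw [runSlate, runSlate, runAux_congr_disc c G hG hD strat [] (by simp)]

end Run

section Pairs

theorem two_mul_card_inter_le_of_card_eq_two {α : Type*} [DecidableEq α] {S T : Finset α}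
    (hT : T.card = 2) (h₁ : S.card = 1 → Disjoint S T) (h₂ : 2 ≤ S.card → S.card ≤ 3 → ¬ T ⊆ S) :
    2 * (S ∩ T).card ≤ S.card := by
  have hle : (S ∩ T).card ≤ 2 := hT ▸ card_le_card inter_subset_right
  by_cases hS₁ : S.card = 1
  · simp [disjoint_iff_inter_eq_empty.1 (h₁ hS₁)]
  by_cases hS₂₃ : 2 ≤ S.card ∧ S.card ≤ 3
  · have : (S ∩ T).card < 2 := hT ▸ card_lt_card
      ⟨inter_subset_right, fun hTS => h₂ hS₂₃.1 hS₂₃.2 fun x hx => (mem_inter.1 (hTS hx)).1⟩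
    omega
  rcases S.eq_empty_or_nonempty with rfl | hS
  · simp
  · have := hS.card_pos
    omega

theorem exists_pair_subset_compl_forall_not_subset (X : Finset (Fin 6))
    (ℳ : Finset (Finset (Fin 6))) (hℳ : ∀ M ∈ ℳ, M.card ≤ 3) (h : X.card + ℳ.card ≤ 3) :
    ∃ T ⊆ Xᶜ, T.card = 2 ∧ ∀ M ∈ ℳ, ¬ T ⊆ M := by
  have hinside : (ℳ.biUnion (powersetCard 2)).card ≤ ℳ.card * 3 :=
    card_biUnion_le_card_mul _ _ _ fun M hM => by
      rw [card_powersetCard]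
      exact (Nat.choose_le_choose 2 (hℳ M hM)).trans (by decide)
  have hpairs : ℳ.card * 3 < (powersetCard 2 Xᶜ).card := by
    rw [card_powersetCard, card_compl, Fintype.card_fin]
    have hX : X.card ≤ 3 := by omega
    generalize X.card = k at h hX
    interval_cases k <;> simp only [Nat.choose_two_right] <;> omega
  obtain ⟨T, hT, hTℳ⟩ := exists_mem_notMem_of_card_lt_card (hinside.trans_lt hpairs)
  rw [mem_powersetCard] at hT
  exact ⟨T, hT.1, hT.2, fun M hM hTM =>
    hTℳ (mem_biUnion.2 ⟨M, hM, mem_powersetCard.2 ⟨hTM, hT.2⟩⟩)⟩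

theorem exists_pair_forall_two_mul_card_inter_le (𝒮 : Finset (Finset (Fin 6)))
    (h𝒮 : 𝒮.card ≤ 3) :
    ∃ T : Finset (Fin 6), T.card = 2 ∧ ∀ S ∈ 𝒮, 2 * (S ∩ T).card ≤ S.card := by
  set singletons := 𝒮.filter (·.card = 1)
  set ℳ := 𝒮.filter fun S => 2 ≤ S.card ∧ S.card ≤ 3
  have hX : (singletons.biUnion id).card ≤ singletons.card := by
    simpa using card_biUnion_le_card_mul singletons id 1 fun S hS => (mem_filter.1 hS).2.le
  have hcount : singletons.card + ℳ.card ≤ 𝒮.card := by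
    rw [← card_union_of_disjoint (disjoint_filter.2 fun S _ h₁ h₂ => by omega)]
    exact card_le_card (union_subset (filter_subset _ _) (filter_subset _ _))
  obtain ⟨T, hTX, hT, hTℳ⟩ := exists_pair_subset_compl_forall_not_subset
    (singletons.biUnion id) ℳ (fun M hM => (mem_filter.1 hM).2.2) (by omega)
  refine ⟨T, hT, fun S hS => two_mul_card_inter_le_of_card_eq_two hT (fun h₁ => ?_)
    fun h₂ h₃ => hTℳ S (mem_filter.2 ⟨hS, h₂, h₃⟩)⟩
  exact disjoint_of_subset_left (subset_biUnion_of_mem id (mem_filter.2 ⟨hS, h₁⟩))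
    (disjoint_of_subset_right hTX disjoint_compl_right)

end Pairs

section HardInstance

variable {A : Type} [DecidableEq A] (β δ : ℕ) (T : Finset A)

def majoritySide (S : Finset A) : Finset A :=
  if 2 * (S ∩ T).card ≤ S.card then S \ T else S ∩ T

theorem majoritySide_subset (S : Finset A) : majoritySide T S ⊆ S := by
  unfold majoritySide
  split
  · exact sdiff_subset
  · exact inter_subset_left

theorem card_inter_le_card_majoritySide (S : Finset A) :
    (S ∩ T).card ≤ (majoritySide T S).card := by
  have := card_sdiff_add_card_inter S T
  unfold majoritySide
  split <;> omega

theorem card_sdiff_le_card_majoritySide (S : Finset A) :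
    (S \ T).card ≤ (majoritySide T S).card := by
  have := card_sdiff_add_card_inter S T
  unfold majoritySide
  split <;> omega

theorem card_inter_majoritySide_le (S S' : Finset A) :
    (S ∩ majoritySide T S').card ≤ (majoritySide T S).card := by
  unfold majoritySide
  split
  · refine (card_le_card fun i hi => ?_).trans (card_sdiff_le_card_majoritySide T S)
    simp only [mem_inter, mem_sdiff] at hi ⊢
    exact ⟨hi.1, hi.2.2⟩
  · refine (card_le_card fun i hi => ?_).trans (card_inter_le_card_majoritySide T S)
    simp only [mem_inter] at hi ⊢
    exact ⟨hi.1, hi.2.2⟩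

def hardUtility (i : A) : Option (Finset A) → ℕ
  | none => if i ∈ T then 2 * β + δ + 1 else 1
  | some S => if i ∈ majoritySide T S then 2 * β + 1 else 1

def hardDisc (i : A) : Option (Finset A) → ℕ
  | none => hardUtility β δ T i none
  | some _ => β + 1

theorem hardUtility_mem_Icc (i : A) (α : Option (Finset A)) :
    hardUtility β δ T i α ∈ Set.Icc 1 (2 * β + δ + 1) := by
  cases α <;> simp only [hardUtility] <;> split <;> constructor <;> omega

theorem hardDisc_accurate : DiscAccurate (hardUtility β δ T) (hardDisc β δ T) β := by
  intro i α
  cases α with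
  | none => exact ⟨Nat.sub_le _ _, Nat.le_add_right _ _⟩
  | some S => simp only [hardUtility, hardDisc]; split <;> omega

theorem supp_hardUtility_le (α : Option (Finset A)) (S : Finset A) {ℓ : ℕ} (hℓ : 2 ≤ ℓ) :
    supp (hardUtility β δ T) α S ℓ ≤ (majoritySide T S).card := by
  cases α with
  | none =>
    refine (card_le_card fun i hi => ?_).trans (card_inter_le_card_majoritySide T S)
    obtain ⟨hiS, hiℓ⟩ := mem_filter.1 hi
    refine mem_inter.2 ⟨hiS, by_contra fun hiT => ?_⟩
    simp only [hardUtility, if_neg hiT] at hiℓ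
    omega
  | some S' =>
    refine (card_le_card fun i hi => ?_).trans (card_inter_majoritySide_le T S S')
    obtain ⟨hiS, hiℓ⟩ := mem_filter.1 hi
    refine mem_inter.2 ⟨hiS, by_contra fun hiT => ?_⟩
    simp only [hardUtility, if_neg hiT] at hiℓ
    omega

theorem card_majoritySide_le_supp (S : Finset A) {ℓ : ℕ} (hℓ : ℓ ≤ 2 * β + 1) :
    (majoritySide T S).card ≤ supp (hardUtility β δ T) (some S) S ℓ := by
  refine card_le_card fun i hi => mem_filter.2 ⟨?_, ?_⟩
  · exact majoritySide_subset T S hi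
  · simp only [hardUtility, if_pos hi]
    exact hℓ

theorem hardGen_accurate (B : ℕ) :
    GenAccurate (fun _ => 1) (hardUtility β δ T) (fun S _ _ => some S)
      (2 * β + δ + 1) B 1 δ 1 := by
  intro S ℓ x _ hℓr hx _
  refine ⟨hx, fun α _ => ?_⟩
  rw [one_mul, Nat.cast_le]
  by_cases hlow : ℓ - δ ≤ 1
  · have hall : supp (hardUtility β δ T) (some S) S (ℓ - δ) = S.card := by
      refine congrArg card (filter_true_of_mem fun i _ => ?_)
      exact hlow.trans (hardUtility_mem_Icc β δ T i (some S)).1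
    exact hall ▸ card_filter_le _ _
  · calc supp (hardUtility β δ T) α S ℓ ≤ (majoritySide T S).card :=
          supp_hardUtility_le β δ T α S (by omega)
      _ ≤ supp (hardUtility β δ T) (some S) S (ℓ - δ) :=
          card_majoritySide_le_supp β δ T S (by omega)

theorem hardUtility_some_eq_one {S : Finset A} (hS : 2 * (S ∩ T).card ≤ S.card) {i : A}
    (hi : i ∈ T) : hardUtility β δ T i (some S) = 1 := by
  simp [hardUtility, majoritySide, hS, hi]

variable [Fintype A] {T} {W : Finset (Option (Finset A))} (B : ℕ) {ε : ℝ}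

theorem not_cJR_hardUtility (hT : T.Nonempty) (hTq : ceilDiv (Fintype.card A) B ≤ T.card)
    (hε : 0 < ε) (hW : ∀ α ∈ W, ∀ i ∈ T, hardUtility β δ T i α = 1) :
    ¬ CJR (fun _ => 1) (hardUtility β δ T) (2 * β + δ + 1) B (((2 * β + δ : ℕ) : ℝ) - ε) 1 W :=
  fun h => h ⟨T, none, 2 * β + δ + 1, hT, by omega, le_rfl,
    by rw [one_mul, one_mul]; exact_mod_cast hTq, fun i hi => by simp [hardUtility, hi],
    fun α hα i hi => by rw [hW α hα i hi]; push_cast; linarith⟩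

theorem not_costBJR_hardUtility (hT : T.Nonempty) (hTq : ceilDiv (Fintype.card A) B ≤ T.card)
    (hε : 0 < ε) (hW : ∀ α ∈ W, ∀ i ∈ T, hardUtility β δ T i α = 1) :
    ¬ CostBJR (fun _ => 1) (hardUtility β δ T) (2 * β + δ + 1) B
      (((2 * β + δ : ℕ) : ℝ) - ε) 1 W := by
  rintro ⟨ω, hωW, -, hno⟩
  exact hno ⟨T, none, 2 * β + δ + 1, hT, by omega, le_rfl,
    by rw [one_mul, one_mul]; exact_mod_cast hTq, fun i hi => by simp [hardUtility, hi],
    fun i hi => by rw [hW (ω i) (hωW i) i hi]; push_cast; linarith⟩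

end HardInstance

theorem runSlate_hardDisc (β δ : ℕ) {n : ℕ} (T : Finset (Fin n))
    (c : Option (Finset (Fin n)) → ℕ) (strat : Strategy n) :
    runSlate c (hardDisc β δ T) (fun S _ _ => some S) strat =
      runSlate c (hardDisc β δ ∅) (fun S _ _ => some S) strat :=
  runSlate_congr_disc c _ (P := fun a => a.isSome) (fun _ _ _ => rfl)
    (fun _ a ha => by cases a <;> simp_all [hardDisc]) strat

theorem no_algorithm_guarantees_beating_utility_errors_general
    (β δ : ℕ) (ε : ℝ) (hε : 0 < ε)
    (Alg : (n : ℕ) → (B : ℕ) → (r : ℕ) → Strategy n) :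
    ∃ (n : ℕ) (U : Type) (c : U → ℕ) (u : Fin n → U → ℕ)
      (Disc : Fin n → U → ℕ) (Gen : Finset (Fin n) → ℕ → ℕ → U) (B r : ℕ),
      0 < B ∧ β ≤ r ∧ δ ≤ r ∧
      (∀ i α, 1 ≤ u i α ∧ u i α ≤ r) ∧
      (∀ α : U, c α = 1) ∧
      DiscAccurate u Disc β ∧
      GenAccurate c u Gen r B 1 δ 1 ∧
      ¬ (cost c (runSlate c Disc Gen (Alg n B r)) ≤ B ∧
          CostBJR c u r B (((2 * β + δ : ℕ) : ℝ) - ε) 1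
            (runSlate c Disc Gen (Alg n B r))) ∧
      ¬ (cost c (runSlate c Disc Gen (Alg n B r)) ≤ B ∧
          CJR c u r B (((2 * β + δ : ℕ) : ℝ) - ε) 1
            (runSlate c Disc Gen (Alg n B r))) := by
  set W :=
    runSlate (fun _ => 1) (hardDisc β δ ∅) (fun S _ _ => some S) (Alg 6 3 (2 * β + δ + 1))
  obtain ⟨T, hT⟩ : ∃ T : Finset (Fin 6), W.card ≤ 3 →
      T.card = 2 ∧ ∀ S, some S ∈ W → 2 * (S ∩ T).card ≤ S.card := by
    by_cases hW : W.card ≤ 3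
    · obtain ⟨T, hT, hTW⟩ :=
        exists_pair_forall_two_mul_card_inter_le (univ.filter (some · ∈ W)) <|
          (card_le_card_of_injOn some (fun S hS => (mem_filter.1 hS).2)
            (Option.some_injective _).injOn).trans hW
      exact ⟨T, fun _ => ⟨hT, fun S hS => hTW S (mem_filter.2 ⟨mem_univ S, hS⟩)⟩⟩
    · exact ⟨∅, fun h => absurd h hW⟩
  have hlow (hW : W.card ≤ 3) : ∀ α ∈ W, ∀ i ∈ T, hardUtility β δ T i α = 1 := by
    intro α hα i hi
    obtain ⟨S, rfl⟩ : ∃ S, α = some S := Option.isSome_iff_exists.1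
      (forall_mem_runSlate _ _ (P := fun a => a.isSome) (fun _ _ _ => rfl) _ α hα)
    exact hardUtility_some_eq_one β δ T ((hT hW).2 S hα) hi
  have hT_nonempty (hW : W.card ≤ 3) : T.Nonempty := card_pos.1 (by rw [(hT hW).1]; norm_num)
  have hTq (hW : W.card ≤ 3) : ceilDiv (Fintype.card (Fin 6)) 3 ≤ T.card := by
    rw [(hT hW).1]
    decide
  have hcost : cost (fun _ => 1) W = W.card := by simp [cost]
  refine ⟨6, _, fun _ => 1, hardUtility β δ T, hardDisc β δ T, fun S _ _ => some S, 3,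
    2 * β + δ + 1, by norm_num, by omega, by omega, fun i α => hardUtility_mem_Icc β δ T i α,
    fun _ => rfl, hardDisc_accurate β δ T, hardGen_accurate β δ T 3, ?_, ?_⟩ <;>
  rw [runSlate_hardDisc, hcost] <;> rintro ⟨hW, h⟩
  · exact not_costBJR_hardUtility β δ 3 (hT_nonempty hW) (hTq hW) hε (hlow hW) h
  · exact not_cJR_hardUtility β δ 3 (hT_nonempty hW) (hTq hW) hε (hlow hW) h

/-- Theorem 3.3: for every algorithm (given by a strategy for every
instance size `n`, budget `B` and number of utility levels `r`) there is an instance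
with unit costs, `β-accurate` discriminative queries and `(1,δ,1)`-accurate generative
queries on which the output slate fails `(2β + δ − ε, 1)`-costBJR and fails
`(2β + δ − ε, 1)`-cJR (or exceeds the budget). -/
theorem no_algorithm_guarantees_beating_utility_errors
    (β δ : ℕ) (hβ : 1 ≤ β) (hδ : 1 ≤ δ) (ε : ℝ) (hε : 0 < ε)
    (Alg : (n : ℕ) → (B : ℕ) → (r : ℕ) → Strategy n) :
    ∃ (n : ℕ) (U : Type) (c : U → ℕ) (u : Fin n → U → ℕ)
      (Disc : Fin n → U → ℕ) (Gen : Finset (Fin n) → ℕ → ℕ → U) (B r : ℕ),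
      0 < B ∧ β ≤ r ∧ δ ≤ r ∧
      (∀ i α, 1 ≤ u i α ∧ u i α ≤ r) ∧
      (∀ α : U, c α = 1) ∧
      DiscAccurate u Disc β ∧
      GenAccurate c u Gen r B 1 δ 1 ∧
      ¬ (cost c (runSlate c Disc Gen (Alg n B r)) ≤ B ∧
          CostBJR c u r B (((2 * β + δ : ℕ) : ℝ) - ε) 1
            (runSlate c Disc Gen (Alg n B r))) ∧
      ¬ (cost c (runSlate c Disc Gen (Alg n B r)) ≤ B ∧
          CJR c u r B (((2 * β + δ : ℕ) : ℝ) - ε) 1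
            (runSlate c Disc Gen (Alg n B r))) :=
  no_algorithm_guarantees_beating_utility_errors_general β δ ε hε Alg

end GenSoc
end

section
/- Fix rational numbers γ, μ with 0 ≤ γ < 1 and 0 ≤ μ < 1, and p ∈ ℕ₀. No algorithm whose only access to the universe 𝒰 and to the agents' utility functions is via exact discriminative queries and (γ, 0, μ)-accurate generative queries can guarantee that its output slate W satisfies (p, (1/μ)·|W|/(|W|γ + 1))-costBJR, and none can guarantee (p, (1/μ)·|W|/(|W|γ + 1))-cJR. -/
/-!
Statement 3 (Theorem 3.4 of the paper): fix rationals `γ, μ` with `0 ≤ γ < 1` and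
`0 ≤ μ < 1`, and `p ∈ ℕ₀`. No algorithm whose only access to the universe and the
utilities is via exact discriminative queries and `(γ, 0, μ)`-accurate generative
queries can guarantee that its output slate `W` satisfies
`(p, (1/μ)·|W|/(|W|γ + 1))`-costBJR, and none can guarantee
`(p, (1/μ)·|W|/(|W|γ + 1))`-cJR.

An algorithm is modelled as an adaptive query strategy: it may issue generative queries
(receiving a fresh statement, of which it learns the cost) and discriminative queries on
previously received statements (referenced by the index in which they were received),
and finally outputs a slate consisting of previously received statements.
-/

namespace GenSoc

open Finset

open scoped Classical

/-- Every statement output by a strategy satisfies any predicate that holds on all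
statements returned by the generative oracle (and on all previously seen statements). -/
lemma runAux_forall {n : ℕ} {U : Type} (c : U → ℕ)
    (Disc : Fin n → U → ℕ) (Gen : Finset (Fin n) → ℕ → ℕ → U) (P : U → Prop)
    (hGen : ∀ S ℓ x, P (Gen S ℓ x)) :
    ∀ (strat : Strategy n) (seen : List U), (∀ a ∈ seen, P a) →
      ∀ a ∈ runAux c Disc Gen strat seen, P a := by
  intro strat
  induction strat with
  | output idxs =>
    intro seen hseen a ha
    simp only [runAux, List.mem_filterMap] at ha
    obtain ⟨j, _, hj⟩ := ha
    exact hseen _ (List.mem_of_getElem? hj)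
  | genQ S ℓ x k ih =>
    intro seen hseen a ha
    refine ih _ (seen ++ [Gen S ℓ x]) ?_ a ha
    intro b hb
    rcases List.mem_append.1 hb with hb | hb
    · exact hseen _ hb
    · simp only [List.mem_singleton] at hb; subst hb; exact hGen _ _ _
  | discQ i j k ih =>
    intro seen hseen a ha
    exact ih _ seen hseen a ha

/-- Every statement in the output slate satisfies any predicate that holds on all
statements returned by the generative oracle. -/
lemma runSlate_forall {n : ℕ} {U : Type} (c : U → ℕ)
    (Disc : Fin n → U → ℕ) (Gen : Finset (Fin n) → ℕ → ℕ → U) (P : U → Prop)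
    (hGen : ∀ S ℓ x, P (Gen S ℓ x)) (strat : Strategy n) :
    ∀ a ∈ runSlate c Disc Gen strat, P a := by
  intro a ha
  rw [runSlate, List.mem_toFinset] at ha
  exact runAux_forall c Disc Gen P hGen strat [] (by simp) a ha

lemma ceilDiv_mul_self (a b : ℕ) (hb : 0 < b) : ceilDiv (a * b) b = a := by
  unfold ceilDiv
  have h1 : a * b + b - 1 = b * a + (b - 1) := by
    rw [mul_comm]; omega
  rw [h1, Nat.mul_add_div hb, Nat.div_eq_of_lt (by omega)]
  omega

/-- The key arithmetic inequality for the adversarial instance. -/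
lemma key_ineq (γ μ : ℚ) (hγ0 : 0 ≤ γ) (hγ1 : γ < 1) (hμ0 : 0 ≤ μ)
    (B ctrue : ℕ)
    (hBdef : B = if μ = 0 then 1 else if γ = 0 then ⌈(1/μ : ℚ)⌉₊ else ⌈(2/(μ*γ) : ℚ)⌉₊)
    (hctruedef : ctrue = if γ = 0 then 1 else ⌈(μ : ℝ) * (B : ℝ)⌉₊ + 1)
    (w : ℕ) (hw : (w : ℝ) ≤ 1) :
    (1 / (μ : ℝ)) * (w : ℝ) / ((w : ℝ) * (γ : ℝ) + 1) * (ctrue : ℝ) ≤ (B : ℝ) := by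
  have hγ0' : (0:ℝ) ≤ (γ : ℝ) := by exact_mod_cast hγ0
  have hμ0' : (0:ℝ) ≤ (μ : ℝ) := by exact_mod_cast hμ0
  have hw0 : (0:ℝ) ≤ (w : ℝ) := Nat.cast_nonneg _
  have hden : (0:ℝ) < (w : ℝ) * (γ:ℝ) + 1 := by positivity
  by_cases hμ : μ = 0
  · rw [hμ]; push_cast
    rw [div_zero, zero_mul, zero_div, zero_mul]
    positivity
  · have hμpos : (0:ℝ) < (μ : ℝ) := by
      have : (0:ℚ) < μ := lt_of_le_of_ne hμ0 (Ne.symm hμ)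
      exact_mod_cast this
    by_cases hγ : γ = 0
    · have hctrue1 : ctrue = 1 := by rw [hctruedef, if_pos hγ]
      have hB : (1 / μ : ℚ) ≤ (B : ℚ) := by
        rw [hBdef, if_neg hμ, if_pos hγ]; exact_mod_cast Nat.le_ceil _
      have hB' : 1 / (μ:ℝ) ≤ (B : ℝ) := by exact_mod_cast hB
      have hγR : (γ:ℝ) = 0 := by rw [hγ]; norm_num
      rw [hctrue1, hγR]
      simp only [mul_zero, zero_add, div_one, Nat.cast_one, mul_one]
      have h1 : 1 / (μ:ℝ) * (w:ℝ) ≤ 1 / (μ:ℝ) * 1 :=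
        mul_le_mul_of_nonneg_left hw (by positivity)
      rw [mul_one] at h1
      linarith
    · have hγpos : (0:ℝ) < (γ : ℝ) := by
        have : (0:ℚ) < γ := lt_of_le_of_ne hγ0 (Ne.symm hγ)
        exact_mod_cast this
      have hC : (ctrue : ℝ) ≤ (μ:ℝ) * (B:ℝ) + 2 := by
        rw [hctruedef, if_neg hγ]
        push_cast
        have := Nat.ceil_lt_add_one (a := (μ:ℝ) * (B:ℝ)) (by positivity)
        linarith
      have h2 : (2:ℝ) ≤ (μ:ℝ) * (γ:ℝ) * (B:ℝ) := by
        have hμγ : (0:ℚ) < μ * γ := by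
          have h1 : (0:ℚ) < μ := lt_of_le_of_ne hμ0 (Ne.symm hμ)
          have h2 : (0:ℚ) < γ := lt_of_le_of_ne hγ0 (Ne.symm hγ)
          positivity
        have hB : (2/(μ*γ) : ℚ) ≤ (B : ℚ) := by
          rw [hBdef, if_neg hμ, if_neg hγ]; exact_mod_cast Nat.le_ceil _
        rw [div_le_iff₀ hμγ] at hB
        have : (2:ℝ) ≤ (B:ℝ) * ((μ:ℝ) * (γ:ℝ)) := by exact_mod_cast hB
        linarith
      rw [div_mul_eq_mul_div, div_le_iff₀ hden, one_div, inv_mul_eq_div,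
        div_mul_eq_mul_div, div_le_iff₀ hμpos]
      have hBnn : (0:ℝ) ≤ (B:ℝ) := Nat.cast_nonneg _
      nlinarith [mul_le_mul_of_nonneg_left hC hw0,
        mul_le_mul_of_nonneg_right hw (mul_nonneg hμ0' hBnn),
        mul_le_mul_of_nonneg_right h2 hw0]

/-- Theorem 3.4: for every algorithm (given by a strategy for every
instance size `n`, budget `B` and number of utility levels `r`) there is an instance
with exact discriminative queries and `(γ,0,μ)`-accurate generative queries on which
the output slate `W` fails `(p, (1/μ)·|W|/(|W|·γ + 1))`-costBJR and fails
`(p, (1/μ)·|W|/(|W|·γ + 1))`-cJR (or exceeds the budget). -/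
theorem no_algorithm_guarantees_beating_generative_errors
    (γ μ : ℚ) (hγ0 : 0 ≤ γ) (hγ1 : γ < 1) (hμ0 : 0 ≤ μ) (hμ1 : μ < 1) (p : ℕ)
    (Alg : (n : ℕ) → (B : ℕ) → (r : ℕ) → Strategy n) :
    ∃ (n : ℕ) (U : Type) (c : U → ℕ) (u : Fin n → U → ℕ)
      (Disc : Fin n → U → ℕ) (Gen : Finset (Fin n) → ℕ → ℕ → U) (B r : ℕ),
      0 < B ∧
      (∀ i α, 1 ≤ u i α ∧ u i α ≤ r) ∧
      DiscAccurate u Disc 0 ∧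
      GenAccurate c u Gen r B (γ : ℝ) 0 (μ : ℝ) ∧
      ¬ (cost c (runSlate c Disc Gen (Alg n B r)) ≤ B ∧
          CostBJR c u r B (p : ℝ)
            ((1 / (μ : ℝ)) * ((runSlate c Disc Gen (Alg n B r)).card : ℝ) /
              (((runSlate c Disc Gen (Alg n B r)).card : ℝ) * (γ : ℝ) + 1))
            (runSlate c Disc Gen (Alg n B r))) ∧
      ¬ (cost c (runSlate c Disc Gen (Alg n B r)) ≤ B ∧
          CJR c u r B (p : ℝ)
            ((1 / (μ : ℝ)) * ((runSlate c Disc Gen (Alg n B r)).card : ℝ) /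
              (((runSlate c Disc Gen (Alg n B r)).card : ℝ) * (γ : ℝ) + 1))
            (runSlate c Disc Gen (Alg n B r))) := by
  classical
  -- choose the budget
  set B : ℕ := if μ = 0 then 1 else if γ = 0 then ⌈(1/μ : ℚ)⌉₊ else ⌈(2/(μ*γ) : ℚ)⌉₊
    with hBdef
  have hBpos : 0 < B := by
    rw [hBdef]
    split_ifs with h1 h2
    · exact one_pos
    · refine Nat.ceil_pos.2 ?_
      have : (0:ℚ) < μ := lt_of_le_of_ne hμ0 (Ne.symm h1)
      positivity
    · refine Nat.ceil_pos.2 ?_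
      have hμp : (0:ℚ) < μ := lt_of_le_of_ne hμ0 (Ne.symm h1)
      have hγp : (0:ℚ) < γ := lt_of_le_of_ne hγ0 (Ne.symm h2)
      positivity
  -- cost of the hidden good statement
  set ctrue : ℕ := if γ = 0 then 1 else ⌈(μ : ℝ) * (B : ℝ)⌉₊ + 1 with hctruedef
  set cf : Bool → ℕ := fun b => if b then ctrue else 1 with hcf
  set uf : Fin B → Bool → ℕ := fun _ b => if b then p + 2 else 1 with huf
  set Genf : Finset (Fin B) → ℕ → ℕ → Bool := fun _ _ _ => false with hGenf
  have hγ0' : (0:ℝ) ≤ (γ : ℝ) := by exact_mod_cast hγ0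
  have hγ1' : (γ : ℝ) ≤ 1 := by exact_mod_cast hγ1.le
  have hμ0' : (0:ℝ) ≤ (μ : ℝ) := by exact_mod_cast hμ0
  -- the slate consists only of the junk statement `false`
  have hWfalse : ∀ a ∈ runSlate cf uf Genf (Alg B B (p+2)), a = false :=
    runSlate_forall cf uf Genf (· = false) (fun _ _ _ => rfl) (Alg B B (p+2))
  have hWcard : ((runSlate cf uf Genf (Alg B B (p+2))).card : ℝ) ≤ 1 := by
    have h : runSlate cf uf Genf (Alg B B (p+2)) ⊆ {false} := fun a ha => by
      simp [hWfalse a ha]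
    have := Finset.card_le_card h
    simp only [Finset.card_singleton] at this
    exact_mod_cast this
  have hWcard0 : (0:ℝ) ≤ ((runSlate cf uf Genf (Alg B B (p+2))).card : ℝ) :=
    Nat.cast_nonneg _
  -- key numeric inequality
  have hkey : (1 / (μ : ℝ)) * ((runSlate cf uf Genf (Alg B B (p+2))).card : ℝ) /
      (((runSlate cf uf Genf (Alg B B (p+2))).card : ℝ) * (γ : ℝ) + 1) * (ctrue : ℝ)
      ≤ (B : ℝ) :=
    key_ineq γ μ hγ0 hγ1 hμ0 B ctrue hBdef hctruedef _ hWcard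
  -- the coalition inequality in the form appearing in the axioms
  have hcoal : (1 / (μ : ℝ)) * ((runSlate cf uf Genf (Alg B B (p+2))).card : ℝ) /
      (((runSlate cf uf Genf (Alg B B (p+2))).card : ℝ) * (γ : ℝ) + 1) *
      (ceilDiv (cf true * Fintype.card (Fin B)) B : ℝ)
      ≤ (((Finset.univ : Finset (Fin B))).card : ℝ) := by
    have h1 : cf true = ctrue := by simp [hcf]
    rw [h1, Fintype.card_fin, ceilDiv_mul_self _ _ hBpos, Finset.card_univ,
      Fintype.card_fin]
    exact hkey
  have hne : (Finset.univ : Finset (Fin B)).Nonempty := ⟨⟨0, hBpos⟩, Finset.mem_univ _⟩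
  refine ⟨B, Bool, cf, uf, uf, Genf, B, p + 2, hBpos, ?_, ?_, ?_, ?_, ?_⟩
  · -- utilities are in [r]
    intro i α
    cases α <;> simp [huf] <;> omega
  · -- exact discriminative queries
    intro i α; simp
  · -- generative accuracy
    intro S ℓ x hℓ1 hℓr hx1 hxB
    constructor
    · simpa [hGenf, hcf] using hx1
    · intro α hα
      simp only [hGenf, Nat.sub_zero]
      cases α with
      | false =>
        have h0 : (0:ℝ) ≤ (supp uf false S ℓ : ℝ) := Nat.cast_nonneg _
        nlinarith
      | true =>
        by_cases hγ : γ = 0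
        · have hγR : (γ:ℝ) = 0 := by rw [hγ]; norm_num
          rw [hγR, zero_mul]
          exact Nat.cast_nonneg _
        · exfalso
          simp only [hcf, if_pos, hctruedef, if_neg hγ] at hα
          have hle : ⌈(μ:ℝ) * (x:ℝ)⌉₊ ≤ ⌈(μ:ℝ) * (B:ℝ)⌉₊ :=
            Nat.ceil_le_ceil (mul_le_mul_of_nonneg_left (by exact_mod_cast hxB) hμ0')
          omega
  · -- costBJR fails
    rintro ⟨-, ω, hωW, -, hno⟩
    refine hno ⟨Finset.univ, true, p + 2, hne, by omega, le_refl _, hcoal, ?_, ?_⟩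
    · intro i _; simp [huf]
    · intro i _
      have h1 : ω i = false := hWfalse _ (hωW i)
      have h2 : uf i (ω i) = 1 := by rw [h1]; simp [huf]
      rw [h2]
      push_cast
      linarith
  · -- cJR fails
    rintro ⟨-, hno⟩
    refine hno ⟨Finset.univ, true, p + 2, hne, by omega, le_refl _, hcoal, ?_, ?_⟩
    · intro i _; simp [huf]
    · intro α' hα' i _
      have h2 : uf i α' = 1 := by rw [hWfalse _ hα']; simp [huf]
      rw [h2]
      push_cast
      linarith

end GenSoc
end

section
/- Let B ≥ 8 be a natural number, let n = 2B, and let N₁, …, N_B be arbitrary nonempty subsets of an n-element ground set. Then there exists a 2-element subset X of the ground set such that |N_i ∩ X| ≤ |N_i|/2 for every i ∈ [B]. -/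
/-!
Statement 9 (combinatorial core of the impossibility proof of Theorem 3.3):
for `B ≥ 8`, `n = 2B`, and arbitrary nonempty subsets `N₁, …, N_B` of an `n`-element
ground set, there is a 2-element subset `X` of the ground set with
`|Nᵢ ∩ X| ≤ |Nᵢ|/2` for every `i ∈ [B]`.
-/

theorem exists_half_condition_pair (B : ℕ) (hB : 8 ≤ B)
    (α : Type) [Fintype α] [DecidableEq α] (hcard : Fintype.card α = 2 * B)
    (N : Fin B → Finset α) (hN : ∀ i, (N i).Nonempty) :
    ∃ X : Finset α, X.card = 2 ∧
      ∀ i : Fin B, ((N i ∩ X).card : ℝ) ≤ ((N i).card : ℝ) / 2 := by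
  classical
  -- Z : indices with singleton N i
  set Z : Finset (Fin B) := Finset.univ.filter (fun i => (N i).card = 1) with hZ
  set S : Finset α := Z.biUnion N with hS
  set T : Finset α := Finset.univ \ S with hT
  have hScard : S.card ≤ Z.card := by
    calc S.card ≤ ∑ i ∈ Z, (N i).card := Finset.card_biUnion_le
    _ = ∑ i ∈ Z, 1 := Finset.sum_congr rfl (fun i hi => (Finset.mem_filter.mp hi).2)
    _ = Z.card := by simp
  have hZB : Z.card ≤ B := by
    have := Finset.card_filter_le (Finset.univ : Finset (Fin B))
      (fun i => (N i).card = 1)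
    simpa using this
  have hTcard : 2 * B - Z.card ≤ T.card := by
    have : T.card = 2 * B - S.card := by
      rw [hT, Finset.card_sdiff_of_subset (Finset.subset_univ _), Finset.card_univ, hcard]
    omega
  set P : Finset (Finset α) := T.powersetCard 2 with hP
  have hPcard : P.card = (T.card).choose 2 := Finset.card_powersetCard 2 T
  set Bad : Fin B → Finset (Finset α) :=
    fun i => if (N i).card ≤ 3 then (N i).powersetCard 2 else ∅ with hBad
  have hBadcard : ∀ i, (Bad i).card ≤ 3 := by
    intro i
    rw [hBad]
    by_cases h : (N i).card ≤ 3
    · simp only [if_pos h]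
      have hc := Finset.card_powersetCard 2 (N i)
      have h2 : (N i).card.choose 2 ≤ Nat.choose 3 2 := Nat.choose_le_choose 2 h
      rw [hc]
      simpa using h2
    · simp [h]
  -- the key: bad pairs are covered
  have hcover : P.filter (fun X => ¬ ∀ i, 2 * ((N i ∩ X).card) ≤ (N i).card)
      ⊆ (Finset.univ \ Z).biUnion Bad := by
    intro X hX
    rw [Finset.mem_filter] at hX
    obtain ⟨hXP, hXbad⟩ := hX
    push_neg at hXbad
    obtain ⟨i, hi⟩ := hXbad
    rw [hP, Finset.mem_powersetCard] at hXP
    obtain ⟨hXT, hX2⟩ := hXP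
    have hint : (N i ∩ X).card ≤ 2 := by
      calc (N i ∩ X).card ≤ X.card := Finset.card_le_card (Finset.inter_subset_right)
      _ = 2 := hX2
    have hNi3 : (N i).card ≤ 3 := by omega
    have hNi1 : 1 ≤ (N i).card := Finset.card_pos.mpr (hN i)
    -- i is not a singleton index
    have hiZ : i ∉ Z := by
      intro hiZ
      have hsub : N i ⊆ S := by
        rw [hS]; exact Finset.subset_biUnion_of_mem N hiZ
      have : N i ∩ X = ∅ := by
        rw [Finset.eq_empty_iff_forall_notMem]
        intro a ha
        rw [Finset.mem_inter] at ha
        have haS : a ∈ S := hsub ha.1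
        have haT : a ∈ T := hXT ha.2
        rw [hT, Finset.mem_sdiff] at haT
        exact haT.2 haS
      rw [this] at hi
      simp at hi
    have hNi2 : 2 ≤ (N i).card := by
      rw [hZ] at hiZ
      simp only [Finset.mem_filter, Finset.mem_univ, true_and] at hiZ
      omega
    have hint2 : 2 ≤ (N i ∩ X).card := by omega
    have hXN : X ⊆ N i := by
      have hinter : N i ∩ X = X := Finset.eq_of_subset_of_card_le
        (Finset.inter_subset_right) (by omega)
      rw [← hinter]
      exact Finset.inter_subset_left
    rw [Finset.mem_biUnion]
    refine ⟨i, by simp [hiZ], ?_⟩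
    rw [hBad]
    simp only [hNi3, if_pos]
    rw [Finset.mem_powersetCard]
    exact ⟨hXN, hX2⟩
  -- counting
  have hbadcount : ((Finset.univ \ Z).biUnion Bad).card ≤ 3 * (B - Z.card) := by
    calc ((Finset.univ \ Z).biUnion Bad).card ≤ ∑ i ∈ Finset.univ \ Z, (Bad i).card :=
      Finset.card_biUnion_le
    _ ≤ ∑ _i ∈ Finset.univ \ Z, 3 := Finset.sum_le_sum (fun i _ => hBadcard i)
    _ = 3 * (B - Z.card) := by
      rw [Finset.sum_const, Finset.card_sdiff_of_subset (Finset.subset_univ _), Finset.card_univ]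
      simp [Nat.mul_comm, Fintype.card_fin]
  have hchoose : 3 * (B - Z.card) < P.card := by
    rw [hPcard]
    set m := B - Z.card with hm
    have h1 : m + 8 ≤ T.card := by omega
    have h2 : (m + 8).choose 2 ≤ (T.card).choose 2 := Nat.choose_le_choose 2 h1
    have h3 : (m + 8).choose 2 = (m + 8) * (m + 7) / 2 := by
      rw [Nat.choose_two_right]; rfl
    have h4 : 3 * m + 1 ≤ (m + 8) * (m + 7) / 2 := by
      rw [Nat.le_div_iff_mul_le (by norm_num)]
      nlinarith
    omega
  -- extract a good pair
  have hgoodne : (P.filter (fun X => ∀ i, 2 * ((N i ∩ X).card) ≤ (N i).card)).Nonempty := by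
    by_contra hcon
    rw [Finset.not_nonempty_iff_eq_empty] at hcon
    have hsplit : P.card = (P.filter (fun X => ∀ i, 2 * ((N i ∩ X).card) ≤ (N i).card)).card
        + (P.filter (fun X => ¬ ∀ i, 2 * ((N i ∩ X).card) ≤ (N i).card)).card :=
      (Finset.card_filter_add_card_filter_not _).symm
    have hle := Finset.card_le_card hcover
    have := hbadcount
    rw [hcon, Finset.card_empty, Nat.zero_add] at hsplit
    omega
  obtain ⟨X, hX⟩ := hgoodne
  rw [Finset.mem_filter] at hX
  obtain ⟨hXP, hXgood⟩ := hX
  rw [hP, Finset.mem_powersetCard] at hXP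
  refine ⟨X, hXP.2, fun i => ?_⟩
  have := hXgood i
  have h := (Nat.cast_le (α := ℝ)).mpr this
  push_cast at h
  linarith
end
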